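/- arXiv:2012.06961 — 2 statements merged into one kernel-verified Lean document; each statement's English description precedes it below -/
import Mathlib

section
/- Consider two offline LPs on horizon T = 2c with capacity c: (A) maximize ∑_{t≤c} x_t + 2∑_{t>c} x_t and (B) maximize ∑_{t≤c} x_t, both subject to ∑_{t=1}^T x_t ≤ c and 0 ≤ x_t ≤ 1. Any online policy π that chooses x_t based only on past information produces the same decisions for the first c periods in both scenarios; letting S = ∑_{t=1}^c x_t(π) ∈ [0, c], the regret in scenario (A) is at least S and in (B) at least c − S. Hence max of the two regrets is at least c/2 = T/4. -/
/-!
Both scenarios share the first-half reward `S`. In (A) the offline optimum `2c` exceeds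
the online reward `S + 2R` by at least `S`, because feasibility gives `S + R ≤ c`; in (B) the
offline optimum `c` exceeds `S` by `c - S`. One of `S` and `c - S` is at least `c / 2`.
-/

open Finset

theorem sum_Icc_succ_consecutive {M : Type*} [AddCommMonoid M] (f : ℕ → M) {m n k : ℕ} (hmn : m ≤ n) (hnk : n ≤ k) :
    ∑ t ∈ Icc (m + 1) n, f t + ∑ t ∈ Icc (n + 1) k, f t = ∑ t ∈ Icc (m + 1) k, f t := by
  simp only [Icc_add_one_left_eq_Ioc]
  exact sum_Ioc_consecutive f hmn hnk

theorem half_le_max_self_sub {a b : ℝ} : b / 2 ≤ max a (b - a) := by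
  rcases le_total a (b / 2) with h | h
  · exact le_max_of_le_right (by linarith)
  · exact le_max_of_le_left h

theorem stmt7_general (c : ℕ) (xA xB : ℕ → ℝ)
    (hA0 : ∀ t, 0 ≤ xA t)
    (hAfeas : ∑ t ∈ Finset.Icc 1 (2 * c), xA t ≤ (c : ℝ))
    (hsame : ∀ t, t ≤ c → xA t = xB t) :
    (∑ t ∈ Finset.Icc 1 c, xA t)
        ≤ 2 * (c : ℝ) - (∑ t ∈ Finset.Icc 1 c, xA t
            + 2 * ∑ t ∈ Finset.Icc (c + 1) (2 * c), xA t) ∧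
    (c : ℝ) - (∑ t ∈ Finset.Icc 1 c, xA t)
        ≤ (c : ℝ) - (∑ t ∈ Finset.Icc 1 c, xB t) ∧
    (c : ℝ) / 2 ≤
      max (2 * (c : ℝ) - (∑ t ∈ Finset.Icc 1 c, xA t
            + 2 * ∑ t ∈ Finset.Icc (c + 1) (2 * c), xA t))
          ((c : ℝ) - (∑ t ∈ Finset.Icc 1 c, xB t)) := by
  set S := ∑ t ∈ Icc 1 c, xA t
  set R := ∑ t ∈ Icc (c + 1) (2 * c), xA t
  have hSR : S + R ≤ c := by
    rw [sum_Icc_succ_consecutive xA (Nat.zero_le c) (by omega)]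
    exact hAfeas
  have hR : 0 ≤ R := sum_nonneg fun t _ ↦ hA0 t
  have hregretA : S ≤ 2 * c - (S + 2 * R) := by linarith
  have hsameS : ∑ t ∈ Icc 1 c, xB t = S :=
    sum_congr rfl fun t ht ↦ (hsame t (mem_Icc.mp ht).2).symm
  rw [hsameS]
  exact ⟨hregretA, le_rfl,
    half_le_max_self_sub.trans (max_le_max hregretA le_rfl)⟩

/-- Adversarial Ω(T) lower bound construction: an online policy makes the same
first-half decisions in the two scenarios; its regret in scenario (A) is at least
`S`, in scenario (B) at least `c - S`, so the worst of the two is at least `c/2`. -/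
theorem stmt7 (c : ℕ) (hc : 1 ≤ c) (xA xB : ℕ → ℝ)
    (hA0 : ∀ t, 0 ≤ xA t) (hA1 : ∀ t, xA t ≤ 1)
    (hB0 : ∀ t, 0 ≤ xB t) (hB1 : ∀ t, xB t ≤ 1)
    (hAfeas : ∑ t ∈ Finset.Icc 1 (2 * c), xA t ≤ (c : ℝ))
    (hBfeas : ∑ t ∈ Finset.Icc 1 (2 * c), xB t ≤ (c : ℝ))
    (hsame : ∀ t, t ≤ c → xA t = xB t) :
    (∑ t ∈ Finset.Icc 1 c, xA t)
        ≤ 2 * (c : ℝ) - (∑ t ∈ Finset.Icc 1 c, xA t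
            + 2 * ∑ t ∈ Finset.Icc (c + 1) (2 * c), xA t) ∧
    (c : ℝ) - (∑ t ∈ Finset.Icc 1 c, xA t)
        ≤ (c : ℝ) - (∑ t ∈ Finset.Icc 1 c, xB t) ∧
    (c : ℝ) / 2 ≤
      max (2 * (c : ℝ) - (∑ t ∈ Finset.Icc 1 c, xA t
            + 2 * ∑ t ∈ Finset.Icc (c + 1) (2 * c), xA t))
          ((c : ℝ) - (∑ t ∈ Finset.Icc 1 c, xB t)) :=
  stmt7_general c xA xB hA0 hAfeas hsame
end

section
/- Let p_l ∈ (Fin m → ℝ) be nonnegative vectors updated in batches: p_{l+1} = (p_l + η ∑_{t=(l-1)K+1}^{lK} (g_t − γ_t)) ∨ 0, with g_t, γ_t ∈ [0,1]^m, p_1 = 0, and η > 0. Suppose coordinate i satisfies: whenever (p_l)_i > q we have (g_t)_i = 0 for all t in batch l. Then ‖p_l‖_∞ ≤ q + ηK for all l. -/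
/-!
A batch adds `η ∑ (g_t - γ_t) ≤ η K` to a coordinate, because `g_t ≤ 1` and `γ_t ≥ 0`. A coordinate
above `q` sees `g_t = 0` throughout its batch, so it cannot increase. Thus a coordinate at most `q`
ends the batch at most `q + η K`, one above `q` does not grow, and the projection onto `[0, ∞)`
keeps everything nonnegative.
-/

open Finset

theorem mem_Icc_of_max_add_increment {x d : ℕ → ℝ} {q c : ℝ} (h₁ : x 1 ∈ Set.Icc 0 (q + c))
    (hstep : ∀ l, 1 ≤ l → x (l + 1) = max (x l + d l) 0) (hdc : ∀ l, 1 ≤ l → d l ≤ c)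
    (hdq : ∀ l, 1 ≤ l → q < x l → d l ≤ 0) :
    ∀ l, 1 ≤ l → x l ∈ Set.Icc 0 (q + c) := by
  intro l hl
  induction l, hl using Nat.le_induction with
  | base => exact h₁
  | succ l hl ih =>
    rw [hstep l hl]
    refine ⟨le_max_right _ _, max_le ?_ (h₁.1.trans h₁.2)⟩
    by_cases hq : q < x l
    · linarith [hdq l hl hq, ih.2]
    · linarith [hdc l hl]

theorem card_Icc_batch (K : ℕ) {l : ℕ} (hl : 1 ≤ l) : #(Icc ((l - 1) * K + 1) (l * K)) = K := by
  have : K ≤ l * K := Nat.le_mul_of_pos_left K hl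
  rw [Nat.card_Icc, Nat.sub_one_mul]
  omega

theorem sum_sub_le_card {ι : Type*} (s : Finset ι) {g γ : ι → ℝ} (hg : ∀ t, g t ≤ 1)
    (hγ : ∀ t, 0 ≤ γ t) : ∑ t ∈ s, (g t - γ t) ≤ #s :=
  calc ∑ t ∈ s, (g t - γ t) ≤ ∑ _t ∈ s, (1 : ℝ) := sum_le_sum fun t _ => by linarith [hg t, hγ t]
    _ = #s := by simp

theorem sum_sub_nonpos_of_eq_zero {ι : Type*} {s : Finset ι} {g γ : ι → ℝ}
    (hg : ∀ t ∈ s, g t = 0) (hγ : ∀ t, 0 ≤ γ t) : ∑ t ∈ s, (g t - γ t) ≤ 0 :=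
  sum_nonpos fun t ht => by linarith [hg t ht, hγ t]

theorem stmt16_general (m K : ℕ) (η q : ℝ) (hη : 0 < η) (hq : 0 ≤ q)
    (p : ℕ → Fin m → ℝ) (g γ : ℕ → Fin m → ℝ)
    (hg : ∀ t i, g t i ∈ Set.Icc (0 : ℝ) 1)
    (hγ : ∀ t i, γ t i ∈ Set.Icc (0 : ℝ) 1)
    (h1 : p 1 = 0)
    (hupd : ∀ l, 1 ≤ l → p (l + 1) = fun i =>
      max (p l i + η * ∑ t ∈ Finset.Icc ((l - 1) * K + 1) (l * K), (g t i - γ t i)) 0)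
    (hzero : ∀ l, 1 ≤ l → ∀ i, q < p l i →
      ∀ t ∈ Finset.Icc ((l - 1) * K + 1) (l * K), g t i = 0) :
    ∀ l, 1 ≤ l → ‖p l‖ ≤ q + η * K := by
  intro l hl
  refine (pi_norm_le_iff_of_nonneg (by positivity)).2 fun i => ?_
  have hmem := mem_Icc_of_max_add_increment (x := fun l => p l i) (c := η * K)
    (d := fun l => η * ∑ t ∈ Icc ((l - 1) * K + 1) (l * K), (g t i - γ t i))
    ⟨by simp [h1], by simp only [h1, Pi.zero_apply]; positivity⟩
    (fun l hl => by rw [hupd l hl])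
    (fun l hl => by
      gcongr
      exact (sum_sub_le_card _ (fun t => (hg t i).2) (fun t => (hγ t i).1)).trans_eq
        (by rw [card_Icc_batch K hl]))
    (fun l hl hql => mul_nonpos_of_nonneg_of_nonpos hη.le
      (sum_sub_nonpos_of_eq_zero (hzero l hl i hql) (fun t => (hγ t i).1)))
    l hl
  rw [Real.norm_of_nonneg hmem.1]
  exact hmem.2

/-- Boundedness of the dual variable under batched updates: each batch update can
increase a coordinate by at most `η K`, and once a coordinate exceeds `q` the
consumptions in that batch vanish, so all iterates satisfy `‖p l‖_∞ ≤ q + η K`. -/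
theorem stmt16 (m K : ℕ) (hK : 1 ≤ K) (η q : ℝ) (hη : 0 < η) (hq : 0 ≤ q)
    (p : ℕ → Fin m → ℝ) (g γ : ℕ → Fin m → ℝ)
    (hg : ∀ t i, g t i ∈ Set.Icc (0 : ℝ) 1)
    (hγ : ∀ t i, γ t i ∈ Set.Icc (0 : ℝ) 1)
    (h1 : p 1 = 0)
    (hupd : ∀ l, 1 ≤ l → p (l + 1) = fun i =>
      max (p l i + η * ∑ t ∈ Finset.Icc ((l - 1) * K + 1) (l * K), (g t i - γ t i)) 0)
    (hzero : ∀ l, 1 ≤ l → ∀ i, q < p l i →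
      ∀ t ∈ Finset.Icc ((l - 1) * K + 1) (l * K), g t i = 0) :
    ∀ l, 1 ≤ l → ‖p l‖ ≤ q + η * K :=
  stmt16_general m K η q hη hq p g γ hg hγ h1 hupd hzero
end
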